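/- Let n ≥ 1, let g : ℝⁿ → ℝ be differentiable and ρ-weakly convex (ρ ≥ 0), let r : ℝⁿ → ℝ ∪ {+∞} be proper, convex and lower semicontinuous, and let x ∈ ℝⁿ, ρ̄ > ρ, α > 0. Suppose x̂ ∈ ℝⁿ is a minimizer of w ↦ g(w) + r(w) + (ρ̄/2)‖w − x‖². Then x̂ is the unique minimizer of w ↦ r(w) + (1/(2α))‖w − (α ρ̄ x − α ∇g(x̂) + (1 − α ρ̄) x̂)‖²; that is, x̂ = prox_{αr}(α ρ̄ x − α ∇g(x̂) + (1 − α ρ̄) x̂). -/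

import Mathlib

open Set

/-- `f` is `ρ`-weakly convex. -/
def WeaklyConvex {E : Type*} [NormedAddCommGroup E] [NormedSpace ℝ E]
    (ρ : ℝ) (f : E → ℝ) : Prop :=
  ∀ x y : E, ∀ t : ℝ, t ∈ Set.Icc (0 : ℝ) 1 →
    f (t • x + (1 - t) • y) ≤ t * f x + (1 - t) * f y + ρ / 2 * (t * (1 - t)) * ‖x - y‖ ^ 2

/-- Convexity for functions with values in `ℝ ∪ {+∞}` (modelled inside `EReal`). -/
def ERealConvexOn {E : Type*} [NormedAddCommGroup E] [NormedSpace ℝ E]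
    (r : E → EReal) : Prop :=
  ∀ x y : E, ∀ t : ℝ, t ∈ Set.Icc (0 : ℝ) 1 →
    r (t • x + (1 - t) • y) ≤ (t : EReal) * r x + ((1 - t : ℝ) : EReal) * r y

open scoped InnerProductSpace
open Filter Topology

set_option maxHeartbeats 2000000 in
theorem stmt_6 (n : ℕ) (hn : 1 ≤ n) (ρ ρbar α : ℝ)
    (hρ : 0 ≤ ρ) (hρbar : ρ < ρbar) (hα : 0 < α)
    (g : EuclideanSpace ℝ (Fin n) → ℝ)
    (hgdiff : Differentiable ℝ g)
    (hgweak : WeaklyConvex ρ g)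
    (r : EuclideanSpace ℝ (Fin n) → EReal)
    (hrbot : ∀ x, r x ≠ ⊥) (hrproper : ∃ x, r x ≠ ⊤)
    (hrconv : ERealConvexOn r) (hrlsc : LowerSemicontinuous r)
    (x xhat : EuclideanSpace ℝ (Fin n))
    -- x̂ is a minimizer of w ↦ g(w) + r(w) + (ρ̄/2)‖w − x‖²
    (hmin : ∀ w : EuclideanSpace ℝ (Fin n),
      ((g xhat + ρbar / 2 * ‖xhat - x‖ ^ 2 : ℝ) : EReal) + r xhat ≤
        ((g w + ρbar / 2 * ‖w - x‖ ^ 2 : ℝ) : EReal) + r w) :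
    -- x̂ is the unique minimizer of w ↦ r(w) + (1/(2α))‖w − (αρ̄x − α∇g(x̂) + (1 − αρ̄)x̂)‖²
    (∀ w : EuclideanSpace ℝ (Fin n),
      ((1 / (2 * α) * ‖xhat - ((α * ρbar) • x - α • gradient g xhat
          + (1 - α * ρbar) • xhat)‖ ^ 2 : ℝ) : EReal) + r xhat ≤
        ((1 / (2 * α) * ‖w - ((α * ρbar) • x - α • gradient g xhat
          + (1 - α * ρbar) • xhat)‖ ^ 2 : ℝ) : EReal) + r w) ∧
    (∀ w : EuclideanSpace ℝ (Fin n),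
      (∀ w' : EuclideanSpace ℝ (Fin n),
        ((1 / (2 * α) * ‖w - ((α * ρbar) • x - α • gradient g xhat
            + (1 - α * ρbar) • xhat)‖ ^ 2 : ℝ) : EReal) + r w ≤
          ((1 / (2 * α) * ‖w' - ((α * ρbar) • x - α • gradient g xhat
            + (1 - α * ρbar) • xhat)‖ ^ 2 : ℝ) : EReal) + r w') → w = xhat) := by
  classical
  set G := gradient g xhat with hG
  set z := (α * ρbar) • x - α • G + (1 - α * ρbar) • xhat with hzdef
  set v : EuclideanSpace ℝ (Fin n) := G + ρbar • (xhat - x) with hv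
  have hxz : xhat - z = α • v := by rw [hzdef, hv]; module
  -- r xhat is a real number
  obtain ⟨w0, hw0⟩ := hrproper
  obtain ⟨s0, hs0⟩ : ∃ s0 : ℝ, r w0 = (s0 : EReal) :=
    ⟨(r w0).toReal, (EReal.coe_toReal hw0 (hrbot w0)).symm⟩
  have hxtop : r xhat ≠ ⊤ := by
    intro hc
    have h2 := hmin w0
    rw [hc, EReal.add_top_of_ne_bot (EReal.coe_ne_bot _), hs0, ← EReal.coe_add] at h2
    exact absurd (top_le_iff.mp h2) (EReal.coe_ne_top _)
  obtain ⟨R, hR⟩ : ∃ R : ℝ, r xhat = (R : EReal) :=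
    ⟨(r xhat).toReal, (EReal.coe_toReal hxtop (hrbot xhat)).symm⟩
  -- key subgradient-type inequality
  have hkey : ∀ (w : EuclideanSpace ℝ (Fin n)) (S : ℝ), r w = (S : EReal) →
      R - S ≤ ⟪v, w - xhat⟫_ℝ := by
    intro w S hS
    set u : EuclideanSpace ℝ (Fin n) := w - xhat with hu
    have hA : ∀ t : ℝ, t ∈ Ioc (0:ℝ) 1 →
        R - S ≤ (g (xhat + t • u) - g xhat) / t
          + (ρbar * ⟪xhat - x, u⟫_ℝ + ρbar * t / 2 * ‖u‖ ^ 2) := by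
      intro t ht
      obtain ⟨ht0, ht1⟩ := ht
      have hwt : t • w + (1 - t) • xhat = xhat + t • u := by rw [hu]; module
      have hrt := hrconv w xhat t ⟨ht0.le, ht1⟩
      rw [hwt, hS, hR] at hrt
      have hrt' : r (xhat + t • u) ≤ ((t * S + (1 - t) * R : ℝ) : EReal) := by
        rw [EReal.coe_add, EReal.coe_mul, EReal.coe_mul]; exact hrt
      have hreal : g xhat + ρbar / 2 * ‖xhat - x‖ ^ 2 + R ≤
          g (xhat + t • u) + ρbar / 2 * ‖xhat + t • u - x‖ ^ 2 + (t * S + (1 - t) * R) := by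
        have h1 : ((g xhat + ρbar / 2 * ‖xhat - x‖ ^ 2 : ℝ) : EReal) + ((R : ℝ) : EReal) ≤
            ((g (xhat + t • u) + ρbar / 2 * ‖xhat + t • u - x‖ ^ 2 : ℝ) : EReal)
              + ((t * S + (1 - t) * R : ℝ) : EReal) := by
          rw [← hR]
          exact (hmin _).trans (add_le_add_right hrt' _)
        rw [← EReal.coe_add, ← EReal.coe_add, EReal.coe_le_coe_iff] at h1
        exact h1
      have hnorm : ‖xhat + t • u - x‖ ^ 2 =
          ‖xhat - x‖ ^ 2 + 2 * (t * ⟪xhat - x, u⟫_ℝ) + t ^ 2 * ‖u‖ ^ 2 := by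
        have hx1 : xhat + t • u - x = (xhat - x) + t • u := by abel
        rw [hx1, norm_add_sq_real, real_inner_smul_right, norm_smul, Real.norm_eq_abs,
          mul_pow, sq_abs]
      rw [div_add' _ _ _ ht0.ne', le_div_iff₀ ht0]
      nlinarith [hreal, hnorm]
    have hderiv : HasDerivAt (fun t : ℝ => g (xhat + t • u)) (fderiv ℝ g xhat u) 0 := by
      have hline : HasDerivAt (fun t : ℝ => xhat + t • u) u 0 := by
        simpa using ((hasDerivAt_id (0:ℝ)).smul_const u).const_add xhat
      have h := (hgdiff (xhat + (0:ℝ) • u)).hasFDerivAt.comp_hasDerivAt 0 hline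
      rw [zero_smul, add_zero] at h
      exact h
    have hslope : Tendsto (fun t : ℝ => (g (xhat + t • u) - g xhat) / t) (𝓝[>] 0)
        (𝓝 (fderiv ℝ g xhat u)) := by
      have h1 := hasDerivAt_iff_tendsto_slope.mp hderiv
      have h2 : (𝓝[>] (0:ℝ)) ≤ 𝓝[≠] 0 := nhdsWithin_mono _ (fun y hy => ne_of_gt hy)
      refine (h1.mono_left h2).congr (fun t => ?_)
      simp [slope_def_field]
    have hconst : Tendsto (fun t : ℝ => ρbar * ⟪xhat - x, u⟫_ℝ + ρbar * t / 2 * ‖u‖ ^ 2)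
        (𝓝[>] 0) (𝓝 (ρbar * ⟪xhat - x, u⟫_ℝ + ρbar * 0 / 2 * ‖u‖ ^ 2)) := by
      have hc : Continuous fun t : ℝ => ρbar * ⟪xhat - x, u⟫_ℝ + ρbar * t / 2 * ‖u‖ ^ 2 := by
        fun_prop
      exact (hc.tendsto 0).mono_left nhdsWithin_le_nhds
    have hle : R - S ≤ fderiv ℝ g xhat u
        + (ρbar * ⟪xhat - x, u⟫_ℝ + ρbar * 0 / 2 * ‖u‖ ^ 2) := by
      refine ge_of_tendsto (hslope.add hconst) ?_
      filter_upwards [Ioc_mem_nhdsGT (one_pos : (0:ℝ) < 1)] with t ht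
      exact hA t ht
    have hfd : fderiv ℝ g xhat u = ⟪G, u⟫_ℝ := by
      rw [hG, gradient]; exact InnerProductSpace.toDual_symm_apply.symm
    have hvin : ⟪v, u⟫_ℝ = ⟪G, u⟫_ℝ + ρbar * ⟪xhat - x, u⟫_ℝ := by
      rw [hv, inner_add_left, real_inner_smul_left]
    rw [hfd] at hle
    linarith [hvin, hle]
  have hc2 : (0:ℝ) < 1 / (2 * α) := by positivity
  -- first conjunct : xhat minimizes the prox objective
  have hglobal : ∀ w : EuclideanSpace ℝ (Fin n),
      ((1 / (2 * α) * ‖xhat - z‖ ^ 2 : ℝ) : EReal) + r xhat ≤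
        ((1 / (2 * α) * ‖w - z‖ ^ 2 : ℝ) : EReal) + r w := by
    intro w
    by_cases hw : r w = ⊤
    · rw [hw, EReal.add_top_of_ne_bot (EReal.coe_ne_bot _), hR, ← EReal.coe_add]
      exact le_top
    · obtain ⟨S, hS⟩ : ∃ S : ℝ, r w = (S : EReal) :=
        ⟨(r w).toReal, (EReal.coe_toReal hw (hrbot w)).symm⟩
      have hk := hkey w S hS
      rw [hR, hS, ← EReal.coe_add, ← EReal.coe_add, EReal.coe_le_coe_iff]
      have hwz : w - z = (w - xhat) + α • v := by
        rw [← hxz]; abel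
      have h1 : ‖xhat - z‖ ^ 2 = α ^ 2 * ‖v‖ ^ 2 := by
        rw [hxz, norm_smul, Real.norm_eq_abs, mul_pow, sq_abs]
      have h2 : ‖w - z‖ ^ 2 = ‖w - xhat‖ ^ 2 + 2 * (α * ⟪w - xhat, v⟫_ℝ)
          + α ^ 2 * ‖v‖ ^ 2 := by
        rw [hwz, norm_add_sq_real, real_inner_smul_right, norm_smul, Real.norm_eq_abs,
          mul_pow, sq_abs]
      rw [real_inner_comm] at hk
      rw [h1, h2]
      have he : 1 / (2 * α) * (‖w - xhat‖ ^ 2 + 2 * (α * ⟪w - xhat, v⟫_ℝ) + α ^ 2 * ‖v‖ ^ 2)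
          = 1 / (2 * α) * ‖w - xhat‖ ^ 2 + ⟪w - xhat, v⟫_ℝ
            + 1 / (2 * α) * (α ^ 2 * ‖v‖ ^ 2) := by
        field_simp
      rw [he]
      linarith [hk, mul_nonneg hc2.le (sq_nonneg ‖w - xhat‖)]
  refine ⟨hglobal, ?_⟩
  -- uniqueness
  intro w hwmin
  have hwx := hwmin xhat
  have hwtop : r w ≠ ⊤ := by
    intro hc
    rw [hc, EReal.add_top_of_ne_bot (EReal.coe_ne_bot _), hR, ← EReal.coe_add] at hwx
    exact absurd (top_le_iff.mp hwx) (EReal.coe_ne_top _)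
  obtain ⟨S, hS⟩ : ∃ S : ℝ, r w = (S : EReal) :=
    ⟨(r w).toReal, (EReal.coe_toReal hwtop (hrbot w)).symm⟩
  -- (i) : xhat is a global minimizer
  have hi : 1 / (2 * α) * ‖xhat - z‖ ^ 2 + R ≤ 1 / (2 * α) * ‖w - z‖ ^ 2 + S := by
    have := hglobal w
    rw [hR, hS, ← EReal.coe_add, ← EReal.coe_add, EReal.coe_le_coe_iff] at this
    exact this
  -- (ii) : minimality of w at the midpoint
  have h12 : (1 - 1/2 : ℝ) = 1/2 := by norm_num
  set m : EuclideanSpace ℝ (Fin n) := (1/2 : ℝ) • w + (1/2 : ℝ) • xhat with hm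
  have hrm : r m ≤ ((1/2 * S + 1/2 * R : ℝ) : EReal) := by
    have hcv := hrconv w xhat (1/2) (by norm_num)
    rw [h12, hS, hR, ← hm] at hcv
    rw [EReal.coe_add, EReal.coe_mul, EReal.coe_mul]
    exact hcv
  have hii : 1 / (2 * α) * ‖w - z‖ ^ 2 + S ≤
      1 / (2 * α) * ‖m - z‖ ^ 2 + (1/2 * S + 1/2 * R) := by
    have h1 : ((1 / (2 * α) * ‖w - z‖ ^ 2 : ℝ) : EReal) + ((S : ℝ) : EReal) ≤
        ((1 / (2 * α) * ‖m - z‖ ^ 2 : ℝ) : EReal) + ((1/2 * S + 1/2 * R : ℝ) : EReal) := by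
      rw [← hS]
      exact (hwmin m).trans (add_le_add_right hrm _)
    rw [← EReal.coe_add, ← EReal.coe_add, EReal.coe_le_coe_iff] at h1
    exact h1
  -- norm identities
  have hmz : m - z = (1/2 : ℝ) • ((w - z) + (xhat - z)) := by rw [hm]; module
  have hnm : ‖m - z‖ ^ 2 = 1/4 * (‖w - z‖ ^ 2 + 2 * ⟪w - z, xhat - z⟫_ℝ + ‖xhat - z‖ ^ 2) := by
    rw [hmz, norm_smul, Real.norm_eq_abs, mul_pow, sq_abs, norm_add_sq_real]
    norm_num
  have hsub : ‖w - xhat‖ ^ 2 = ‖w - z‖ ^ 2 - 2 * ⟪w - z, xhat - z⟫_ℝ + ‖xhat - z‖ ^ 2 := by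
    have hab : w - xhat = (w - z) - (xhat - z) := by abel
    rw [hab, norm_sub_sq_real]
  rw [hnm] at hii
  have key : ∀ A B I c R' S' : ℝ, 0 < c → c * B + R' ≤ c * A + S' →
      c * A + S' ≤ c * (1/4 * (A + 2 * I + B)) + (1/2 * S' + 1/2 * R') →
      A - 2 * I + B ≤ 0 := by
    intro A B I c R' S' hc h1 h2
    nlinarith
  have hfin : ‖w - xhat‖ ^ 2 ≤ 0 := by
    rw [hsub]
    exact key _ _ _ _ R S hc2 hi hii
  have hsq : ‖w - xhat‖ ^ 2 = 0 := le_antisymm hfin (sq_nonneg _)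
  have hn0 : ‖w - xhat‖ = 0 := pow_eq_zero_iff two_ne_zero |>.mp hsq
  exact sub_eq_zero.mp (norm_eq_zero.mp hn0)
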